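/- Let a₀ ≥ 0, b > 0, c ≥ 0 with a₀·b > c, and for x ≥ 0 define g(x) = ((a₀ + x + b) + √((a₀ + x − b)² + 4c)) / ((a₀ + x + b) − √((a₀ + x − b)² + 4c)). Then g attains its minimum on [0, ∞) at x* = max(b − a₀ + 2c/b, 0); i.e. g(x*) ≤ g(x) for all x ≥ 0. Interpretation: given a frame {φ_i}_{i=1}^{m−1} in ℝ² with a₀ = Σ φ_{i,1}², b = Σ φ_{i,2}², c = (Σ φ_{i,1}φ_{i,2})², the condition number of the frame obtained by adjoining φ_m = (√x, 0) is g(x), and it is minimized at x = x*. -/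

import Mathlib

/-!
Write `S = a + b` and `U = √((a - b)² + 4c)`, where `a = a₀ + x`. The condition number
`(S + U) / (S - U)` is increasing in `U / S`, so it suffices to minimise
`((a - b)² + 4c) / (a + b)²` over `a ≥ a₀`. Clearing denominators, this ratio is globally
minimal on `a > -b` at `a = b + 2c/b`, because of the identity
`((a - b)² + 4c)(2b² + 2c)² - (4c² + 4cb²)(a + b)² = 4(b² + c)((a - b)b - 2c)²`,
and it is increasing on `[b + 2c/b, ∞)`. Hence the minimum over `[a₀, ∞)` is at
`max (b + 2c/b) a₀ = a₀ + x*`.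
-/

open Real

/-- The ratio of the eigenvalues `(a + b ± √((a - b)² + 4c)) / 2` of `!![a, s; s, b]`, `s² = c`. -/
noncomputable def condNum (a b c : ℝ) : ℝ :=
  ((a + b) + √((a - b) ^ 2 + 4 * c)) / ((a + b) - √((a - b) ^ 2 + 4 * c))

lemma add_div_sub_le_add_div_sub {S₁ S₂ U₁ U₂ : ℝ} (h₁ : U₁ < S₁) (h₂ : U₂ < S₂)
    (h : U₁ * S₂ ≤ U₂ * S₁) : (S₁ + U₁) / (S₁ - U₁) ≤ (S₂ + U₂) / (S₂ - U₂) := by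
  rw [div_le_div_iff₀ (sub_pos.2 h₁) (sub_pos.2 h₂)]
  linear_combination 2 * h

lemma sqrt_discr_lt_add {a b c : ℝ} (hb : 0 < b) (hc : 0 ≤ c) (h : c < a * b) :
    √((a - b) ^ 2 + 4 * c) < a + b := by
  have ha : 0 < a := pos_of_mul_pos_left (hc.trans_lt h) hb.le
  rw [sqrt_lt' (by linarith)]
  linarith

lemma condNum_le_condNum {a₁ a₂ b c : ℝ} (hb : 0 < b) (hc : 0 ≤ c)
    (h₁ : c < a₁ * b) (h₂ : c < a₂ * b)
    (h : ((a₁ - b) ^ 2 + 4 * c) * (a₂ + b) ^ 2 ≤ ((a₂ - b) ^ 2 + 4 * c) * (a₁ + b) ^ 2) :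
    condNum a₁ b c ≤ condNum a₂ b c := by
  have hU₁ := sqrt_discr_lt_add hb hc h₁
  have hU₂ := sqrt_discr_lt_add hb hc h₂
  refine add_div_sub_le_add_div_sub hU₁ hU₂ ?_
  have hS₁ : 0 ≤ a₁ + b := (sqrt_nonneg _).trans hU₁.le
  have hS₂ : 0 ≤ a₂ + b := (sqrt_nonneg _).trans hU₂.le
  calc √((a₁ - b) ^ 2 + 4 * c) * (a₂ + b)
      = √(((a₁ - b) ^ 2 + 4 * c) * (a₂ + b) ^ 2) := by
        rw [sqrt_mul' _ (sq_nonneg _), sqrt_sq hS₂]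
    _ ≤ √(((a₂ - b) ^ 2 + 4 * c) * (a₁ + b) ^ 2) := sqrt_le_sqrt h
    _ = √((a₂ - b) ^ 2 + 4 * c) * (a₁ + b) := by
        rw [sqrt_mul' _ (sq_nonneg _), sqrt_sq hS₁]

lemma discr_mul_sq_le_of_critical {b c : ℝ} (hb : 0 < b) (hc : 0 ≤ c) (a : ℝ) :
    ((b + 2 * c / b - b) ^ 2 + 4 * c) * (a + b) ^ 2
      ≤ ((a - b) ^ 2 + 4 * c) * (b + 2 * c / b + b) ^ 2 := by
  have key : ((a - b) ^ 2 + 4 * c) * (2 * b ^ 2 + 2 * c) ^ 2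
      - (4 * c ^ 2 + 4 * c * b ^ 2) * (a + b) ^ 2 = 4 * (b ^ 2 + c) * ((a - b) * b - 2 * c) ^ 2 := by
    ring
  have hb2 : 0 < b ^ 2 := by positivity
  rw [← mul_le_mul_iff_of_pos_right hb2]
  have hl : ((b + 2 * c / b - b) ^ 2 + 4 * c) * b ^ 2 = 4 * c ^ 2 + 4 * c * b ^ 2 := by
    field_simp; ring
  have hr : (b + 2 * c / b + b) ^ 2 * b ^ 2 = (2 * b ^ 2 + 2 * c) ^ 2 := by
    field_simp; ring
  calc ((b + 2 * c / b - b) ^ 2 + 4 * c) * (a + b) ^ 2 * b ^ 2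
      = (4 * c ^ 2 + 4 * c * b ^ 2) * (a + b) ^ 2 := by rw [← hl]; ring
    _ ≤ ((a - b) ^ 2 + 4 * c) * (2 * b ^ 2 + 2 * c) ^ 2 := by
        linarith [mul_nonneg (by positivity : 0 ≤ 4 * (b ^ 2 + c)) (sq_nonneg ((a - b) * b - 2 * c))]
    _ = ((a - b) ^ 2 + 4 * c) * (b + 2 * c / b + b) ^ 2 * b ^ 2 := by rw [mul_assoc, hr]

lemma discr_mul_sq_le_of_critical_le {a₁ a₂ b c : ℝ} (hb : 0 < b) (hc : 0 ≤ c)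
    (h₁ : b ^ 2 + 2 * c ≤ a₁ * b) (h₁₂ : a₁ ≤ a₂) :
    ((a₁ - b) ^ 2 + 4 * c) * (a₂ + b) ^ 2 ≤ ((a₂ - b) ^ 2 + 4 * c) * (a₁ + b) ^ 2 := by
  have key : ((a₂ - b) ^ 2 + 4 * c) * (a₁ + b) ^ 2 - ((a₁ - b) ^ 2 + 4 * c) * (a₂ + b) ^ 2
      = 4 * (a₂ - a₁) * (b * a₁ * a₂ - b ^ 3 - c * (a₁ + a₂) - 2 * b * c) := by
    ring
  have hpos : 0 ≤ b * a₁ * a₂ - b ^ 3 - c * (a₁ + a₂) - 2 * b * c := by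
    nlinarith [mul_nonneg (sub_nonneg.2 h₁₂) (sub_nonneg.2 h₁), mul_nonneg hc (sub_nonneg.2 h₁₂),
      mul_nonneg (mul_pos hb hb).le (sub_nonneg.2 h₁₂)]
  linarith [mul_nonneg (mul_nonneg zero_le_four (sub_nonneg.2 h₁₂)) hpos]

theorem stmt_14_general (a₀ b c : ℝ) (hb : 0 < b) (hc : 0 ≤ c) (h : c < a₀ * b) :
    ∀ x : ℝ, 0 ≤ x →
      ((a₀ + max (b - a₀ + 2 * c / b) 0 + b) +
          Real.sqrt ((a₀ + max (b - a₀ + 2 * c / b) 0 - b) ^ 2 + 4 * c)) /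
        ((a₀ + max (b - a₀ + 2 * c / b) 0 + b) -
          Real.sqrt ((a₀ + max (b - a₀ + 2 * c / b) 0 - b) ^ 2 + 4 * c))
      ≤ ((a₀ + x + b) + Real.sqrt ((a₀ + x - b) ^ 2 + 4 * c)) /
          ((a₀ + x + b) - Real.sqrt ((a₀ + x - b) ^ 2 + 4 * c)) := by
  intro x hx
  change condNum _ b c ≤ condNum (a₀ + x) b c
  have hx' : c < (a₀ + x) * b := by nlinarith
  rcases le_total 0 (b - a₀ + 2 * c / b) with hcrit | hcrit
  · rw [max_eq_left hcrit, show a₀ + (b - a₀ + 2 * c / b) = b + 2 * c / b by ring]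
    have hcrit_b : (b + 2 * c / b) * b = b ^ 2 + 2 * c := by field_simp
    exact condNum_le_condNum hb hc (by nlinarith) hx' (discr_mul_sq_le_of_critical hb hc _)
  · rw [max_eq_right hcrit, add_zero]
    have hcrit_b : b ^ 2 + 2 * c ≤ a₀ * b := by
      have hmul := mul_le_mul_of_nonneg_right hcrit hb.le
      rw [add_mul, div_mul_cancel₀ _ hb.ne'] at hmul
      nlinarith
    exact condNum_le_condNum hb hc h hx'
      (discr_mul_sq_le_of_critical_le hb hc hcrit_b (le_add_of_nonneg_right hx))

/-- For a₀ ≥ 0, b > 0, c ≥ 0 with a₀b > c, the condition number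
g(x) = ((a₀+x+b) + √((a₀+x−b)² + 4c)) / ((a₀+x+b) − √((a₀+x−b)² + 4c))
of the frame obtained by adjoining (√x, 0) is minimized over x ≥ 0 at
x* = max(b − a₀ + 2c/b, 0). -/
theorem stmt_14 (a₀ b c : ℝ) (ha₀ : 0 ≤ a₀) (hb : 0 < b) (hc : 0 ≤ c) (h : c < a₀ * b) :
    ∀ x : ℝ, 0 ≤ x →
      ((a₀ + max (b - a₀ + 2 * c / b) 0 + b) +
          Real.sqrt ((a₀ + max (b - a₀ + 2 * c / b) 0 - b) ^ 2 + 4 * c)) /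
        ((a₀ + max (b - a₀ + 2 * c / b) 0 + b) -
          Real.sqrt ((a₀ + max (b - a₀ + 2 * c / b) 0 - b) ^ 2 + 4 * c))
      ≤ ((a₀ + x + b) + Real.sqrt ((a₀ + x - b) ^ 2 + 4 * c)) /
          ((a₀ + x + b) - Real.sqrt ((a₀ + x - b) ^ 2 + 4 * c)) :=
  stmt_14_general a₀ b c hb hc h
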